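/- arXiv:2408.16673 — 2 statements merged into one kernel-verified Lean document; each statement's English description precedes it below -/
import Mathlib

section
/- For 0 < β < 1 and strictly positive pmf f on a finite set, the entropy of the tilted distribution q_β(y) ∝ f(y)^{1/β} is at most the entropy of f: H(q_β) ≤ H(f). -/
/-!
With `t = 1/β > 1` and `Z = ∑ f^t`, one has `log q = t log f - log Z`. Gibbs' inequality applied
to the pair `(f, q)` gives `(t - 1) ∑ f log f ≤ log Z`, and applied to `(q, f)` gives
`log Z ≤ (t - 1) ∑ q log f`. Hence `∑ f log f ≤ ∑ q log f ≤ ∑ q log q`, the last step being Gibbs'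
inequality once more.
-/

open Finset Real

lemma mul_log_sub_mul_log_le {p g : ℝ} (hp : 0 < p) (hg : 0 < g) :
    p * log g - p * log p ≤ g - p := by
  have h := mul_le_mul_of_nonneg_left (log_le_sub_one_of_pos (div_pos hg hp)) hp.le
  rwa [log_div hg.ne' hp.ne', mul_sub, mul_sub, mul_one, mul_div_cancel₀ _ hp.ne'] at h

section Tilt

variable {ι : Type*} [Fintype ι]

theorem sum_mul_log_le_sum_mul_log_self {p g : ι → ℝ} (hp : ∀ y, 0 < p y) (hg : ∀ y, 0 < g y)
    (hgp : ∑ y, g y ≤ ∑ y, p y) : ∑ y, p y * log (g y) ≤ ∑ y, p y * log (p y) := by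
  have h := sum_le_sum fun y (_ : y ∈ univ) => mul_log_sub_mul_log_le (hp y) (hg y)
  rw [sum_sub_distrib, sum_sub_distrib] at h
  linarith

noncomputable def tilt (f : ι → ℝ) (t : ℝ) (y : ι) : ℝ := f y ^ t / ∑ y', f y' ^ t

variable [Nonempty ι] {f : ι → ℝ} (hf : ∀ y, 0 < f y) (t : ℝ)
include hf

lemma sum_rpow_pos : 0 < ∑ y, f y ^ t :=
  sum_pos (fun y _ => rpow_pos_of_pos (hf y) t) univ_nonempty

lemma tilt_pos (y : ι) : 0 < tilt f t y :=
  div_pos (rpow_pos_of_pos (hf y) t) (sum_rpow_pos hf t)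

lemma sum_tilt : ∑ y, tilt f t y = 1 := by
  simp only [tilt]
  rw [← sum_div, div_self (sum_rpow_pos hf t).ne']

lemma sum_mul_log_tilt {p : ι → ℝ} (hp : ∑ y, p y = 1) :
    ∑ y, p y * log (tilt f t y) = t * ∑ y, p y * log (f y) - log (∑ y, f y ^ t) := by
  have hlog (y : ι) : log (tilt f t y) = t * log (f y) - log (∑ y', f y' ^ t) := by
    rw [tilt, log_div (rpow_pos_of_pos (hf y) t).ne' (sum_rpow_pos hf t).ne', log_rpow (hf y)]
  simp only [hlog, mul_sub, sum_sub_distrib, ← sum_mul, hp, one_mul, mul_left_comm _ t, ← mul_sum]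

theorem sum_mul_log_le_sum_tilt_mul_log (hfsum : ∑ y, f y = 1) {t : ℝ} (ht : 1 < t) :
    ∑ y, f y * log (f y) ≤ ∑ y, tilt f t y * log (f y) := by
  have hf_tilt := sum_mul_log_le_sum_mul_log_self hf (tilt_pos hf t) (by rw [hfsum, sum_tilt hf])
  have htilt_f := sum_mul_log_le_sum_mul_log_self (tilt_pos hf t) hf (by rw [hfsum, sum_tilt hf])
  rw [sum_mul_log_tilt hf t hfsum] at hf_tilt
  rw [sum_mul_log_tilt hf t (sum_tilt hf t)] at htilt_f
  refine le_of_mul_le_mul_left ?_ (sub_pos.2 ht)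
  linarith

end Tilt

/-- For `0 < β < 1`, the Shannon entropy of the tilted distribution
`q_β(y) ∝ f(y)^{1/β}` is at most the entropy of `f`. -/
theorem tilted_entropy_le {ι : Type*} [Fintype ι]
    (f : ι → ℝ) (hf : ∀ y, 0 < f y) (hfsum : ∑ y, f y = 1)
    (β : ℝ) (hβ0 : 0 < β) (hβ1 : β < 1)
    (q : ι → ℝ) (hq : q = fun y => f y ^ (1 / β) / ∑ y', f y' ^ (1 / β)) :
    -∑ y, q y * Real.log (q y) ≤ -∑ y, f y * Real.log (f y) := by
  have : Nonempty ι := (nonempty_of_sum_ne_zero (hfsum ▸ one_ne_zero)).to_type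
  change q = tilt f (1 / β) at hq
  subst hq
  calc -∑ y, tilt f (1 / β) y * log (tilt f (1 / β) y)
      ≤ -∑ y, tilt f (1 / β) y * log (f y) :=
        neg_le_neg <| sum_mul_log_le_sum_mul_log_self (tilt_pos hf _) hf
          (by rw [hfsum, sum_tilt hf])
    _ ≤ -∑ y, f y * log (f y) :=
        neg_le_neg <| sum_mul_log_le_sum_tilt_mul_log hf hfsum (one_lt_one_div hβ0 hβ1)
end

section
/- The optimal value of the entropy-regularized reverse KL problem: for strictly positive pmf p on finite Y and γ > 0, min over pmfs f of [D_KL(f‖p) - γ·H(f)] equals -(γ+1)·log(Σ_y p(y)^{1/(γ+1)}). -/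
/-!
Put `a = 1/(γ+1)` and let `q ∝ p^a` be the escort distribution of `p`. Since `log q = a log p - log Z`
with `Z = ∑ p^a`, for every `f` of total mass one the objective equals
`(γ+1) D_KL(f‖q) - (γ+1) log Z`. Gibbs' inequality `D_KL(f‖q) ≥ 0`, with equality at `f = q`,
then gives the minimum `-(γ+1) log Z`.
-/

open Real Finset

section Gibbs

lemma sub_le_mul_log_div {x y : ℝ} (hx : 0 ≤ x) (hy : 0 < y) : x - y ≤ x * log (x / y) := by
  have h := mul_nonneg hy.le (InformationTheory.klFun_nonneg (div_nonneg hx hy.le))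
  rw [InformationTheory.klFun_apply] at h
  field_simp at h
  linarith

lemma sum_mul_log_div_nonneg {ι : Type*} {s : Finset ι} {f q : ι → ℝ}
    (hf : ∀ i ∈ s, 0 ≤ f i) (hq : ∀ i ∈ s, 0 < q i) (hsum : ∑ i ∈ s, q i ≤ ∑ i ∈ s, f i) :
    0 ≤ ∑ i ∈ s, f i * log (f i / q i) :=
  calc 0 ≤ ∑ i ∈ s, (f i - q i) := by rw [sum_sub_distrib]; linarith
    _ ≤ ∑ i ∈ s, f i * log (f i / q i) :=
      sum_le_sum fun i hi => sub_le_mul_log_div (hf i hi) (hq i hi)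

end Gibbs

section Escort

variable {ι : Type*} [Fintype ι] {p : ι → ℝ}

noncomputable def escort (p : ι → ℝ) (a : ℝ) (i : ι) : ℝ :=
  p i ^ a / ∑ j, p j ^ a

variable [Nonempty ι]

lemma sum_rpow_pos_s11 (hp : ∀ i, 0 < p i) (a : ℝ) : 0 < ∑ j, p j ^ a :=
  sum_pos (fun j _ => rpow_pos_of_pos (hp j) a) univ_nonempty

lemma escort_pos (hp : ∀ i, 0 < p i) (a : ℝ) (i : ι) : 0 < escort p a i :=
  div_pos (rpow_pos_of_pos (hp i) a) (sum_rpow_pos_s11 hp a)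

lemma sum_escort (hp : ∀ i, 0 < p i) (a : ℝ) : ∑ i, escort p a i = 1 := by
  simp only [escort, ← sum_div, div_self (sum_rpow_pos_s11 hp a).ne']

lemma log_escort (hp : ∀ i, 0 < p i) (a : ℝ) (i : ι) :
    log (escort p a i) = a * log (p i) - log (∑ j, p j ^ a) := by
  rw [escort, log_div (rpow_pos_of_pos (hp i) a).ne' (sum_rpow_pos_s11 hp a).ne', log_rpow (hp i)]

end Escort

section RegularizedKL

variable {ι : Type*} [Fintype ι]

/-- `D_KL(f‖p) - γ H(f)`. -/
noncomputable def regularizedKL (p : ι → ℝ) (γ : ℝ) (f : ι → ℝ) : ℝ :=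
  (∑ y, f y * log (f y / p y)) - γ * (-∑ y, f y * log (f y))

variable [Nonempty ι] {p : ι → ℝ}

lemma mul_log_div_add_mul_mul_log_eq (hp : ∀ i, 0 < p i) {γ : ℝ} (hγ : γ + 1 ≠ 0)
    (x : ℝ) (i : ι) :
    x * log (x / p i) + γ * (x * log x) =
      (γ + 1) * (x * log (x / escort p (1 / (γ + 1)) i))
        - (γ + 1) * log (∑ j, p j ^ (1 / (γ + 1))) * x := by
  rcases eq_or_ne x 0 with rfl | hx
  · simp
  rw [log_div hx (hp i).ne', log_div hx (escort_pos hp _ i).ne', log_escort hp]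
  field_simp
  ring

lemma regularizedKL_eq (hp : ∀ i, 0 < p i) {γ : ℝ} (hγ : γ + 1 ≠ 0) {f : ι → ℝ}
    (hf : ∑ i, f i = 1) :
    regularizedKL p γ f =
      (γ + 1) * (∑ i, f i * log (f i / escort p (1 / (γ + 1)) i))
        - (γ + 1) * log (∑ j, p j ^ (1 / (γ + 1))) := by
  have hsplit : regularizedKL p γ f = ∑ i, (f i * log (f i / p i) + γ * (f i * log (f i))) := by
    rw [regularizedKL, sum_add_distrib, ← mul_sum]
    ring
  rw [hsplit, sum_congr rfl fun i _ => mul_log_div_add_mul_mul_log_eq hp hγ (f i) i,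
    sum_sub_distrib, ← mul_sum, ← mul_sum, hf, mul_one]

end RegularizedKL

/-- The optimal value of the entropy-regularized reverse KL problem:
`min_f [D_KL(f‖p) - γ·H(f)] = -(γ+1)·log(Σ_y p(y)^{1/(γ+1)})`. -/
theorem reverse_kl_entropy_optimal_value {ι : Type*} [Fintype ι]
    (p : ι → ℝ) (hp : ∀ y, 0 < p y) (hpsum : ∑ y, p y = 1)
    (γ : ℝ) (hγ : 0 < γ) :
    IsLeast
      {v : ℝ | ∃ f : ι → ℝ, (∀ y, 0 ≤ f y) ∧ ∑ y, f y = 1 ∧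
        v = (∑ y, f y * Real.log (f y / p y)) - γ * (-∑ y, f y * Real.log (f y))}
      (-(γ + 1) * Real.log (∑ y, p y ^ (1 / (γ + 1)))) := by
  have : Nonempty ι := by
    by_contra h
    rw [not_nonempty_iff] at h
    simp at hpsum
  have hγ1 : 0 < γ + 1 := by linarith
  set q := escort p (1 / (γ + 1)) with hq_def
  have hq := escort_pos hp (1 / (γ + 1))
  have hqsum := sum_escort hp (1 / (γ + 1))
  refine ⟨⟨q, fun i => (hq i).le, hqsum, ?_⟩, ?_⟩
  · change _ = regularizedKL p γ q
    have hself : ∀ i, q i / q i = 1 := fun i => div_self (hq i).ne'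
    rw [regularizedKL_eq hp hγ1.ne' hqsum]
    simp only [← hq_def, hself, log_one, mul_zero, sum_const_zero]
    ring
  · rintro v ⟨f, hf, hfsum, rfl⟩
    change _ ≤ regularizedKL p γ f
    have hgibbs := sum_mul_log_div_nonneg (fun i _ => hf i) (fun i _ => hq i)
      (hqsum.trans hfsum.symm).le
    rw [regularizedKL_eq hp hγ1.ne' hfsum]
    linarith [mul_nonneg hγ1.le hgibbs]
end
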